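/- arXiv:2209.01063 — 2 statements merged into one kernel-verified Lean document; each statement's English description precedes it below -/
import Mathlib

section
/- Let E ⊂ ℝ^n and f : E → ℝ. Assume that for every ε > 0 and every x ∈ E there exists ρ > 0 such that, for all r ∈ (0,ρ), E ∩ B̄_r(x) ∩ f^{−1}([f(x)−ρ, f(x)+ρ]) ⊂ {y : dist(y, Π_{x,r}) ≤ ε r} for some m-dimensional affine plane Π_{x,r} passing through x (possibly depending on r). Then the Hausdorff dimension of E is at most m. -/
open MeasureTheory Metric Filter Topology Set

noncomputable section

/-- `Euc n` is the Euclidean space `ℝ^{n+1}`. -/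
abbrev Euc (n : ℕ) : Type := EuclideanSpace ℝ (Fin (n + 1))

/-- Reflection across the thin space `{x_{n+1} = 0}`. -/
def reflectLast (n : ℕ) (x : Euc n) : Euc n :=
  WithLp.toLp 2 (fun i => if i = Fin.last n then -(x i) else x i)

/-- The (pointwise) Laplacian of `u : ℝ^{n+1} → ℝ`. -/
def lap (n : ℕ) (u : Euc n → ℝ) (x : Euc n) : ℝ :=
  ∑ i : Fin (n + 1),
    fderiv ℝ (fun y => fderiv ℝ u y (EuclideanSpace.single i 1)) x (EuclideanSpace.single i 1)

/-- `u` is a solution of the Signorini problem (with zero obstacle) on the open set `s ⊆ ℝ^{n+1}`: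
continuous, even in the last variable, harmonic off the thin space, nonnegative on the thin
space, with distributional Laplacian a nonpositive measure supported on the contact set
`{x_{n+1} = 0} ∩ {u = 0}` (equivalently `min{u, -Δu} = 0` on the thin space). -/
structure IsSignorini (n : ℕ) (s : Set (Euc n)) (u : Euc n → ℝ) : Prop where
  cont : ContinuousOn u s
  symm : ∀ x ∈ s, u (reflectLast n x) = u x
  smooth_off : ∀ x ∈ s, x (Fin.last n) ≠ 0 → ContDiffAt ℝ 2 u x
  harmonic_off : ∀ x ∈ s, x (Fin.last n) ≠ 0 → lap n u x = 0
  nonneg_thin : ∀ x ∈ s, x (Fin.last n) = 0 → 0 ≤ u x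
  /-- `Δu ≤ 0` distributionally -/
  superharm : ∀ φ : Euc n → ℝ, ContDiff ℝ (⊤ : ℕ∞) φ → HasCompactSupport φ →
    tsupport φ ⊆ s → (∀ x, 0 ≤ φ x) → ∫ x, u x * lap n φ x ≤ 0
  /-- `Δu` vanishes away from the contact set `{x_{n+1} = 0} ∩ {u = 0}` -/
  lap_vanish : ∀ φ : Euc n → ℝ, ContDiff ℝ (⊤ : ℕ∞) φ → HasCompactSupport φ →
    tsupport φ ⊆ s → Disjoint (tsupport φ) {x | x (Fin.last n) = 0 ∧ u x = 0} →
    ∫ x, u x * lap n φ x = 0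

/-- `u` is (positively) `κ`-homogeneous. -/
def IsHomog (n : ℕ) (κ : ℝ) (u : Euc n → ℝ) : Prop :=
  ∀ c : ℝ, 0 < c → ∀ x, u (c • x) = c ^ κ * u x

/-- A monotone family of solutions of the Signorini problem, i.e. `(5.1)-(5.2)` of the paper:
for each `t ∈ [-1,1]`, `u t` solves the Signorini problem in `B_1`; the family is monotone in
`t`; it grows at least linearly in `t` on `∂B_1 ∩ {|x_{n+1}| ≥ 1/2}`; and `‖u(·,t)‖_{C^{0,1}} ≤ 1`. -/
structure IsMonotoneFamily (n : ℕ) (u : ℝ → Euc n → ℝ) : Prop where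
  sol : ∀ t ∈ Icc (-1 : ℝ) 1, IsSignorini n (ball 0 1) (u t)
  mono : ∀ t ∈ Icc (-1 : ℝ) 1, ∀ t' ∈ Icc (-1 : ℝ) 1, t < t' →
    ∀ x ∈ closedBall (0 : Euc n) 1, u t x ≤ u t' x
  grow : ∀ t ∈ Icc (-1 : ℝ) 1, ∀ t' ∈ Icc (-1 : ℝ) 1, t < t' →
    ∀ x ∈ sphere (0 : Euc n) 1, (1 : ℝ) / 2 ≤ |x (Fin.last n)| → t' - t ≤ u t' x - u t x
  bdd : ∀ t ∈ Icc (-1 : ℝ) 1, ∀ x ∈ ball (0 : Euc n) 1, |u t x| ≤ 1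
  lip : ∀ t ∈ Icc (-1 : ℝ) 1, LipschitzOnWith 1 (u t) (ball 0 1)

/-- `H(r,w) = r^{-n} ∫_{∂B_r} w²`, written via the surface measure of the unit sphere. -/
def Hfn (n : ℕ) (w : Euc n → ℝ) (r : ℝ) : ℝ :=
  ∫ x : sphere (0 : Euc n) 1, (w (r • (x : Euc n))) ^ 2
    ∂((volume : Measure (Euc n)).toSphere)

/-- `D(r,w) = r^{1-n} ∫_{B_r} |∇w|²`. -/
def Dfn (n : ℕ) (w : Euc n → ℝ) (r : ℝ) : ℝ :=
  r ^ (1 - (n : ℝ)) * ∫ x in ball (0 : Euc n) r, ‖fderiv ℝ w x‖ ^ 2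

/-- The Almgren frequency `φ(r,w) = D(r,w)/H(r,w)`. -/
def freq (n : ℕ) (w : Euc n → ℝ) (r : ℝ) : ℝ := Dfn n w r / Hfn n w r

/-- `φ(0⁺,w)`, the limit of the frequency as `r → 0⁺` (the frequency being nondecreasing in `r`
for the functions considered, the `limsup` is the limit). -/
def freq0 (n : ℕ) (w : Euc n → ℝ) : ℝ := limsup (fun r => freq n w r) (𝓝[>] (0 : ℝ))

/-- The free boundary `Γ(u) = ∂{u(·,0) = 0} × {0}` (boundary in the thin space) of a solution
of the Signorini problem in `B_1`. -/
def FreeBoundary (n : ℕ) (u : Euc n → ℝ) : Set (Euc n) :=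
  {x | x ∈ ball (0 : Euc n) 1 ∧ x (Fin.last n) = 0 ∧ u x = 0 ∧
    x ∈ closure {y : Euc n | y (Fin.last n) = 0 ∧ u y ≠ 0}}

/-- The frequency of `u` at the point `x`. -/
def freqAt (n : ℕ) (u : Euc n → ℝ) (x : Euc n) : ℝ := freq0 n (fun y => u (x + y))

/-- The stratum `Γ_κ(u)` of free boundary points of frequency `κ`. -/
def Gamma (n : ℕ) (u : Euc n → ℝ) (κ : ℝ) : Set (Euc n) :=
  {x ∈ FreeBoundary n u | freqAt n u x = κ}

/-- The set `Γ_{≥κ}(u)` of free boundary points of frequency `≥ κ`. -/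
def GammaGe (n : ℕ) (u : Euc n → ℝ) (κ : ℝ) : Set (Euc n) :=
  {x ∈ FreeBoundary n u | κ ≤ freqAt n u x}

/-- `S = {1, 3/2, 2, 3, 7/2, 4, …} = ℕ_{≥1} ∪ (2ℕ_{≥1} - 1/2)`, the possible homogeneities in
dimension `n + 1 = 2`. -/
def Sexc : Set ℝ :=
  {κ | (∃ k : ℕ, 1 ≤ k ∧ κ = k) ∨ ∃ k : ℕ, 1 ≤ k ∧ κ = 2 * k - 1 / 2}

/-- `Γ_*(u)`: free boundary points whose frequency is not in `S`. -/
def GammaStar (n : ℕ) (u : Euc n → ℝ) : Set (Euc n) :=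
  {x ∈ FreeBoundary n u | freqAt n u x ∉ Sexc}

/-- Membership in `P_2`: 2-homogeneous harmonic polynomials, even in `x_{n+1}`, nonnegative on
the thin space (including `p ≡ 0`). -/
structure MemP2 (n : ℕ) (p : Euc n → ℝ) : Prop where
  smooth : ContDiff ℝ (⊤ : ℕ∞) p
  harm : ∀ x, lap n p x = 0
  homog : ∀ (c : ℝ) (x : Euc n), p (c • x) = c ^ 2 * p x
  symm : ∀ x, p (reflectLast n x) = p x
  nonneg_thin : ∀ x : Euc n, x (Fin.last n) = 0 → 0 ≤ p x

/-- `p` is the (first) blow-up `p_{2,x₀} = lim_{r→0} r^{-2} u(x₀ + r·)` of `u` at `x₀`. -/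
def IsBlowup2At (n : ℕ) (u : Euc n → ℝ) (x₀ : Euc n) (p : Euc n → ℝ) : Prop :=
  MemP2 n p ∧ TendstoUniformlyOn (fun (r : ℝ) (y : Euc n) => u (x₀ + r • y) / r ^ 2) p
    (𝓝[>] (0 : ℝ)) (closedBall 0 1)

/-- Ordinary quadratic points: `Γ₂ᵒ(u) = {x₀ ∈ Γ₂(u) : φ(0⁺, u(x₀+·) - p_{2,x₀}) ≥ 3}`. -/
def Gamma2o (n : ℕ) (u : Euc n → ℝ) : Set (Euc n) :=
  {x ∈ Gamma n u 2 | ∃ p, IsBlowup2At n u x p ∧ 3 ≤ freq0 n (fun y => u (x + y) - p y)}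

/-- Anomalous quadratic points: `Γ₂ᵃ(u) = {x₀ ∈ Γ₂(u) : φ(0⁺, u(x₀+·) - p_{2,x₀}) = 2}`. -/
def Gamma2a (n : ℕ) (u : Euc n → ℝ) : Set (Euc n) :=
  {x ∈ Gamma n u 2 | ∃ p, IsBlowup2At n u x p ∧ freq0 n (fun y => u (x + y) - p y) = 2}

/-- `𝚪_κ`, the union over `t ∈ [-1,1]` of `Γ_κ(u(·,t))`. -/
def BGamma (n : ℕ) (u : ℝ → Euc n → ℝ) (κ : ℝ) : Set (Euc n) :=
  ⋃ t ∈ Icc (-1 : ℝ) 1, Gamma n (u t) κ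

/-- `𝚪_{≥κ}`, the union over `t ∈ [-1,1]` of `Γ_{≥κ}(u(·,t))`. -/
def BGammaGe (n : ℕ) (u : ℝ → Euc n → ℝ) (κ : ℝ) : Set (Euc n) :=
  ⋃ t ∈ Icc (-1 : ℝ) 1, GammaGe n (u t) κ

/-- `𝚪_*`, the union over `t ∈ [-1,1]` of `Γ_*(u(·,t))`. -/
def BGammaStar (n : ℕ) (u : ℝ → Euc n → ℝ) : Set (Euc n) :=
  ⋃ t ∈ Icc (-1 : ℝ) 1, GammaStar n (u t)

/-- `𝚪₂ᵒ`, the union over `t ∈ [-1,1]` of `Γ₂ᵒ(u(·,t))`. -/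
def BGamma2o (n : ℕ) (u : ℝ → Euc n → ℝ) : Set (Euc n) :=
  ⋃ t ∈ Icc (-1 : ℝ) 1, Gamma2o n (u t)

/-- `𝚪₂ᵃ`, the union over `t ∈ [-1,1]` of `Γ₂ᵃ(u(·,t))`. -/
def BGamma2a (n : ℕ) (u : ℝ → Euc n → ℝ) : Set (Euc n) :=
  ⋃ t ∈ Icc (-1 : ℝ) 1, Gamma2a n (u t)

/-- Weak convergence `v_k ⇀ q` in `H¹_loc(ℝ^{n+1})`, tested against smooth compactly
supported functions. -/
def WeakH1loc (n : ℕ) (v : ℕ → Euc n → ℝ) (q : Euc n → ℝ) : Prop :=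
  ∀ φ : Euc n → ℝ, ContDiff ℝ (⊤ : ℕ∞) φ → HasCompactSupport φ →
    Tendsto (fun k => ∫ x, v k x * φ x) atTop (𝓝 (∫ x, q x * φ x)) ∧
    Tendsto (fun k => ∫ x, (inner ℝ (gradient (v k) x) (gradient φ x) : ℝ)) atTop
      (𝓝 (∫ x, (inner ℝ (gradient q x) (gradient φ x) : ℝ)))

/-- A set is discrete: each of its points is isolated. -/
def IsDiscreteSet {X : Type*} [PseudoMetricSpace X] (s : Set X) : Prop :=
  ∀ x ∈ s, ∃ ε > 0, s ∩ ball x ε ⊆ {x}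

end

/-!
Fix `s > m`. Cutting `E` into countably many pieces on which `ρ` is bounded below and `f`
oscillates by less than `ρ` removes `f` from the hypothesis and makes the flatness uniform in `x`.
In a uniformly `ε`-flat set `S`, the piece `S ∩ B̄(x, r)` lies in the `εr`-neighbourhood of an
`m`-plane, so a volume packing argument in the plane covers it by `K ≈ (C / ε)^m` balls of radius
`6εr` centred in `S`. Iterating, `S ∩ B̄(x, r)` is covered by `K^k` balls of radius `(6ε)^k r`,
whose `s`-dimensional Hausdorff sums are `(K (6ε)^s)^k (2r)^s`. Since `K (6ε)^s ≈ ε^(s - m)`, this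
tends to `0` for small `ε`, so `μH[s] E = 0`.
-/

open scoped ENNReal NNReal
open Module

section Packing

variable {V : Type*} [NormedAddCommGroup V] [NormedSpace ℝ V] [FiniteDimensional ℝ V]

theorem Metric.IsSeparated.card_le_of_subset_closedBall {C : Finset V} {x : V} {R : ℝ}
    {δ : ℝ≥0} (hδ : 0 < δ) (hR : 0 ≤ R) (hCx : (C : Set V) ⊆ closedBall x R)
    (hC : IsSeparated δ (C : Set V)) :
    (C.card : ℝ) ≤ ((2 * R + δ) / δ) ^ finrank ℝ V := by
  borelize V
  set μ : Measure V := Measure.addHaar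
  have hδ' : (0 : ℝ) < δ := hδ
  have hdisj : (C : Set V).PairwiseDisjoint fun c => ball c (δ / 2) := by
    intro c hc c' hc' hne
    have hcc' : (δ : ℝ≥0∞) < edist c c' := hC hc hc' hne
    rw [edist_nndist, ENNReal.coe_lt_coe, ← NNReal.coe_lt_coe, coe_nndist] at hcc'
    exact ball_disjoint_ball (by linarith)
  have hsub : ⋃ c ∈ C, ball c (δ / 2) ⊆ ball x (R + δ / 2) :=
    iUnion₂_subset fun c hc => ball_subset_ball' <| by linarith [mem_closedBall.mp (hCx hc)]
  have hvol : (C.card : ℝ≥0∞) * μ (ball 0 (δ / 2)) ≤ μ (ball 0 (R + δ / 2)) :=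
    calc (C.card : ℝ≥0∞) * μ (ball 0 (δ / 2)) = ∑ c ∈ C, μ (ball c (δ / 2)) := by
          simp [Measure.addHaar_ball_center]
      _ = μ (⋃ c ∈ C, ball c (δ / 2)) :=
          (measure_biUnion_finset hdisj fun _ _ => measurableSet_ball).symm
      _ ≤ μ (ball x (R + δ / 2)) := measure_mono hsub
      _ = μ (ball 0 (R + δ / 2)) := Measure.addHaar_ball_center μ x _
  rw [Measure.addHaar_ball_of_pos μ 0 (half_pos hδ'),
    Measure.addHaar_ball_of_pos μ 0 (by positivity : 0 < R + δ / 2),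
    ← mul_assoc, ENNReal.mul_le_mul_iff_left (measure_ball_pos μ 0 one_pos).ne'
      measure_ball_lt_top.ne, ← ENNReal.ofReal_natCast, ← ENNReal.ofReal_mul (by positivity),
    ENNReal.ofReal_le_ofReal_iff (by positivity), ← le_div_iff₀ (by positivity), ← div_pow] at hvol
  rwa [show (R + δ / 2) / (δ / 2) = (2 * R + δ) / δ by field_simp] at hvol

theorem Metric.packingNumber_closedBall_ne_top (x : V) {R : ℝ} {δ : ℝ≥0} (hδ : 0 < δ)
    (hR : 0 ≤ R) : packingNumber δ (closedBall x R) ≠ ⊤ := by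
  intro htop
  obtain ⟨n, hn⟩ := exists_nat_gt (((2 * R + δ) / δ) ^ finrank ℝ V)
  have hlt : (n : ℕ∞) < packingNumber δ (closedBall x R) := htop ▸ ENat.natCast_lt_top n
  simp only [packingNumber, lt_iSup_iff] at hlt
  obtain ⟨C, hCx, hC, hnC⟩ := hlt
  obtain ⟨D, hDC, hDn⟩ := Set.exists_subset_encard_eq hnC.le
  have hD : D.Finite := Set.finite_of_encard_eq_coe hDn
  rw [hD.encard_eq_coe_toFinset_card, Nat.cast_inj] at hDn
  have hsep : IsSeparated δ (hD.toFinset : Set V) := by simpa using hC.subset hDC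
  have := hsep.card_le_of_subset_closedBall hδ hR (by simpa using hDC.trans hCx)
  rw [hDn] at this
  linarith

theorem exists_finset_card_le_closedBall_subset (x : V) {R δ : ℝ} (hδ : 0 < δ)
    (hR : 0 ≤ R) : ∃ C : Finset V, (C.card : ℝ) ≤ ((2 * R + δ) / δ) ^ finrank ℝ V ∧
      closedBall x R ⊆ ⋃ c ∈ C, closedBall c δ := by
  lift δ to ℝ≥0 using hδ.le
  replace hδ : 0 < δ := NNReal.coe_pos.mp hδ
  have hfin := packingNumber_closedBall_ne_top x hδ hR
  have hM : (maximalSeparatedSet δ (closedBall x R)).Finite := by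
    rw [← Set.encard_ne_top_iff, encard_maximalSeparatedSet hfin]
    exact hfin
  refine ⟨hM.toFinset, ?_, ?_⟩
  · exact IsSeparated.card_le_of_subset_closedBall hδ hR (by simpa using maximalSeparatedSet_subset)
      (by simpa using isSeparated_maximalSeparatedSet)
  · simpa using (isCover_maximalSeparatedSet hfin).subset_iUnion_closedBall

end Packing

theorem exists_internal_cover_two_mul_of_subset_iUnion_closedBall {X : Type*}
    [PseudoMetricSpace X] {A : Set X} {T : Finset X} {δ : ℝ}
    (hA : A ⊆ ⋃ t ∈ T, closedBall t δ) :
    ∃ C : Finset X, ↑C ⊆ A ∧ C.card ≤ T.card ∧ A ⊆ ⋃ c ∈ C, closedBall c (2 * δ) := by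
  classical
  have hmeets : ∀ t ∈ T.filter fun t => (A ∩ closedBall t δ).Nonempty,
      (A ∩ closedBall t δ).Nonempty := fun t ht => (Finset.mem_filter.mp ht).2
  choose! c hcA hct using hmeets
  refine ⟨(T.filter fun t => (A ∩ closedBall t δ).Nonempty).image c, ?_,
    Finset.card_image_le.trans (Finset.card_filter_le _ _), fun y hy => ?_⟩
  · rw [Finset.coe_image]
    rintro _ ⟨t, ht, rfl⟩
    exact hcA t ht
  obtain ⟨t, ht, hyt⟩ := mem_iUnion₂.mp (hA hy)
  have htA : t ∈ T.filter fun t => (A ∩ closedBall t δ).Nonempty :=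
    Finset.mem_filter.mpr ⟨ht, y, hy, hyt⟩
  refine mem_iUnion₂.mpr ⟨c t, Finset.mem_image_of_mem c htA, ?_⟩
  calc dist y (c t) ≤ dist y t + dist (c t) t := dist_triangle_right _ _ _
    _ ≤ 2 * δ := by linarith [mem_closedBall.mp hyt, mem_closedBall.mp (hct t htA)]

section AffineCovers

variable {V : Type*} [NormedAddCommGroup V] [NormedSpace ℝ V]

theorem AffineSubspace.exists_finset_card_le_inter_closedBall_subset {P : AffineSubspace ℝ V}
    [FiniteDimensional ℝ P.direction] {x : V} (hx : x ∈ P) {R δ : ℝ} (hδ : 0 < δ)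
    (hR : 0 ≤ R) : ∃ T : Finset V, (T.card : ℝ) ≤ ((2 * R + δ) / δ) ^ finrank ℝ P.direction ∧
      (P : Set V) ∩ closedBall x R ⊆ ⋃ t ∈ T, closedBall t δ := by
  classical
  obtain ⟨C, hCcard, hC⟩ := exists_finset_card_le_closedBall_subset (0 : P.direction) hδ hR
  refine ⟨C.image fun v : P.direction => (v : V) + x,
    le_trans (by exact_mod_cast Finset.card_image_le) hCcard, ?_⟩
  rintro z ⟨hzP, hzx⟩
  have hv : z - x ∈ P.direction := AffineSubspace.vsub_mem_direction hzP hx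
  have hvR : (⟨z - x, hv⟩ : P.direction) ∈ closedBall 0 R := by
    simpa [← dist_eq_norm] using hzx
  obtain ⟨c, hc, hvc⟩ := mem_iUnion₂.mp (hC hvR)
  refine mem_iUnion₂.mpr ⟨c + x, Finset.mem_image_of_mem _ hc, ?_⟩
  rw [mem_closedBall, dist_eq_norm, add_comm, ← sub_sub, ← dist_eq_norm]
  exact mem_closedBall.mp hvc

theorem exists_finset_card_le_cover_of_infDist_le {S : Set V} {P : AffineSubspace ℝ V}
    [FiniteDimensional ℝ P.direction] {x : V} (hx : x ∈ P) {ε r : ℝ} (hε : 0 < ε) (hr : 0 < r)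
    (hflat : ∀ y ∈ S ∩ closedBall x r, infDist y P ≤ ε * r) :
    ∃ C : Finset V, ↑C ⊆ S ∧ (C.card : ℝ) ≤ ((2 + 5 * ε) / ε) ^ finrank ℝ P.direction ∧
      S ∩ closedBall x r ⊆ ⋃ c ∈ C, closedBall c (6 * ε * r) := by
  obtain ⟨T, hTcard, hT⟩ := P.exists_finset_card_le_inter_closedBall_subset hx
    (R := (1 + 2 * ε) * r) (δ := ε * r) (by positivity) (by positivity)
  have hcover : S ∩ closedBall x r ⊆ ⋃ t ∈ T, closedBall t (3 * ε * r) := by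
    intro y hy
    obtain ⟨z, hzP, hyz⟩ := (infDist_lt_iff ⟨x, hx⟩).mp
      ((hflat y hy).trans_lt (by nlinarith : ε * r < 2 * ε * r))
    have hzx : z ∈ closedBall x ((1 + 2 * ε) * r) := by
      rw [mem_closedBall]
      linarith [dist_triangle_left z x y, mem_closedBall.mp hy.2]
    obtain ⟨t, ht, hzt⟩ := mem_iUnion₂.mp (hT ⟨hzP, hzx⟩)
    refine mem_iUnion₂.mpr ⟨t, ht, mem_closedBall.mpr ?_⟩
    linarith [dist_triangle y z t, mem_closedBall.mp hzt]
  obtain ⟨C, hCS, hCcard, hC⟩ := exists_internal_cover_two_mul_of_subset_iUnion_closedBall hcover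
  rw [show 2 * (3 * ε * r) = 6 * ε * r by ring] at hC
  refine ⟨C, hCS.trans inter_subset_left, ?_, hC⟩
  calc (C.card : ℝ) ≤ T.card := by exact_mod_cast hCcard
    _ ≤ _ := hTcard
    _ = ((2 + 5 * ε) / ε) ^ finrank ℝ P.direction := by
      congr 1
      field_simp
      ring

end AffineCovers

section UniformCovers

variable {X : Type*} [MetricSpace X]

def UniformlyCoverable (S : Set X) (K θ ρ : ℝ) : Prop :=
  ∀ x ∈ S, ∀ r ∈ Ioo 0 ρ, ∃ C : Finset X, ↑C ⊆ S ∧ (C.card : ℝ) ≤ K ∧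
    S ∩ closedBall x r ⊆ ⋃ c ∈ C, closedBall c (θ * r)

variable {S : Set X} {K θ ρ : ℝ}

theorem UniformlyCoverable.nonneg (h : UniformlyCoverable S K θ ρ) {x : X} (hx : x ∈ S) {r : ℝ}
    (hr : r ∈ Ioo 0 ρ) : 0 ≤ K := by
  obtain ⟨C, -, hC, -⟩ := h x hx r hr
  exact (Nat.cast_nonneg _).trans hC

theorem UniformlyCoverable.exists_finset_cover_pow (h : UniformlyCoverable S K θ ρ)
    (hθ0 : 0 < θ) (hθ1 : θ ≤ 1) {x : X} (hx : x ∈ S) {r : ℝ} (hr : r ∈ Ioo 0 ρ) (k : ℕ) :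
    ∃ C : Finset X, ↑C ⊆ S ∧ (C.card : ℝ) ≤ K ^ k ∧
      S ∩ closedBall x r ⊆ ⋃ c ∈ C, closedBall c (θ ^ k * r) := by
  classical
  have hK := h.nonneg hx hr
  induction k with
  | zero => exact ⟨{x}, by simpa using hx, by simp, fun y hy => by simpa using hy.2⟩
  | succ k ih =>
    obtain ⟨F, hFS, hFcard, hF⟩ := ih
    have hrk : θ ^ k * r ∈ Ioo 0 ρ :=
      ⟨by have := hr.1; positivity,
        (mul_le_of_le_one_left hr.1.le (pow_le_one₀ hθ0.le hθ1)).trans_lt hr.2⟩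
    choose! G hGS hGcard hG using fun z (hz : z ∈ S) => h z hz _ hrk
    refine ⟨F.biUnion G, ?_, ?_, fun y hy => ?_⟩
    · simpa using fun z hz => hGS z (hFS hz)
    · calc ((F.biUnion G).card : ℝ) ≤ ∑ z ∈ F, ((G z).card : ℝ) := by
            exact_mod_cast Finset.card_biUnion_le
        _ ≤ ∑ _z ∈ F, K := Finset.sum_le_sum fun z hz => hGcard z (hFS hz)
        _ = F.card * K := by rw [Finset.sum_const, nsmul_eq_mul]
        _ ≤ K ^ k * K := mul_le_mul_of_nonneg_right hFcard hK
        _ = K ^ (k + 1) := (pow_succ K k).symm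
    · obtain ⟨z, hz, hyz⟩ := mem_iUnion₂.mp (hF hy)
      obtain ⟨c, hc, hyc⟩ := mem_iUnion₂.mp (hG z (hFS hz) ⟨hy.1, hyz⟩)
      refine mem_iUnion₂.mpr ⟨c, Finset.mem_biUnion.mpr ⟨z, hz, hc⟩, ?_⟩
      rwa [pow_succ, mul_comm _ θ, mul_assoc]

theorem UniformlyCoverable.hausdorffMeasure_inter_closedBall_eq_zero [MeasurableSpace X]
    [BorelSpace X] (h : UniformlyCoverable S K θ ρ) (hθ0 : 0 < θ) (hθ1 : θ < 1) {s : ℝ}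
    (hs : 0 ≤ s) (hKθ : K * θ ^ s < 1) {x : X} (hx : x ∈ S) {r : ℝ} (hr : r ∈ Ioo 0 ρ) :
    μH[s] (S ∩ closedBall x r) = 0 := by
  choose F _ hFcard hF using h.exists_finset_cover_pow hθ0 hθ1.le hx hr
  have hrad : ∀ k : ℕ, 0 ≤ θ ^ k * r := fun k => by have := hr.1; positivity
  have hdiam : ∀ (k : ℕ) (c : X),
      ediam (closedBall c (θ ^ k * r)) ≤ ENNReal.ofReal (2 * (θ ^ k * r)) :=
    fun k c => ediam_le_of_forall_dist_le fun a ha b hb =>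
      (dist_le_diam_of_mem isBounded_closedBall ha hb).trans (diam_closedBall (hrad k))
  have hsum : ∀ k : ℕ, ∑ c : F k, ediam (closedBall (c : X) (θ ^ k * r)) ^ s ≤
      ENNReal.ofReal ((K * θ ^ s) ^ k * (2 * r) ^ s) := fun k => by
    calc ∑ c : F k, ediam (closedBall (c : X) (θ ^ k * r)) ^ s
        ≤ ∑ _c : F k, ENNReal.ofReal (2 * (θ ^ k * r)) ^ s :=
          Finset.sum_le_sum fun c _ => ENNReal.rpow_le_rpow (hdiam k c) hs
      _ = ENNReal.ofReal ((F k).card * (2 * (θ ^ k * r)) ^ s) := by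
          rw [Finset.sum_const, Finset.card_univ, Fintype.card_coe, nsmul_eq_mul,
            ENNReal.ofReal_rpow_of_nonneg (by linarith [hrad k]) hs, ← ENNReal.ofReal_natCast,
            ← ENNReal.ofReal_mul (Nat.cast_nonneg _)]
      _ ≤ ENNReal.ofReal (K ^ k * (2 * (θ ^ k * r)) ^ s) :=
          ENNReal.ofReal_le_ofReal <| mul_le_mul_of_nonneg_right (hFcard k) <|
            Real.rpow_nonneg (by linarith [hrad k]) s
      _ = ENNReal.ofReal ((K * θ ^ s) ^ k * (2 * r) ^ s) := by
          rw [mul_left_comm, Real.mul_rpow (pow_nonneg hθ0.le k) (by linarith [hr.1]),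
            ← Real.rpow_pow_comm hθ0.le, mul_pow, mul_assoc]
  have hlim :
      Tendsto (fun k : ℕ => ENNReal.ofReal ((K * θ ^ s) ^ k * (2 * r) ^ s)) atTop (𝓝 0) := by
    have hKθ0 : 0 ≤ K * θ ^ s := mul_nonneg (h.nonneg hx hr) (Real.rpow_nonneg hθ0.le s)
    simpa using ENNReal.tendsto_ofReal
      ((tendsto_pow_atTop_nhds_zero_of_lt_one hKθ0 hKθ).mul_const ((2 * r) ^ s))
  have hrad0 : Tendsto (fun k : ℕ => ENNReal.ofReal (2 * (θ ^ k * r))) atTop (𝓝 0) := by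
    simpa using ENNReal.tendsto_ofReal
      (((tendsto_pow_atTop_nhds_zero_of_lt_one hθ0.le hθ1).mul_const r).const_mul 2)
  refine le_antisymm ?_ bot_le
  calc μH[s] (S ∩ closedBall x r)
      ≤ liminf (fun k => ∑ c : F k, ediam (closedBall (c : X) (θ ^ k * r)) ^ s) atTop :=
        Measure.hausdorffMeasure_le_liminf_sum s _ _ hrad0
          (fun k (c : F k) => closedBall (c : X) (θ ^ k * r)) (.of_forall fun k c => hdiam k c)
          (.of_forall fun k y hy => by
            obtain ⟨c, hc, hyc⟩ := mem_iUnion₂.mp (hF k hy)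
            exact mem_iUnion.mpr ⟨⟨c, hc⟩, hyc⟩)
    _ ≤ liminf (fun k : ℕ => ENNReal.ofReal ((K * θ ^ s) ^ k * (2 * r) ^ s)) atTop :=
        liminf_le_liminf (.of_forall hsum)
    _ = 0 := hlim.liminf_eq

theorem UniformlyCoverable.hausdorffMeasure_eq_zero [MeasurableSpace X] [BorelSpace X]
    [SecondCountableTopology X] (h : UniformlyCoverable S K θ ρ) (hθ0 : 0 < θ) (hθ1 : θ < 1)
    {s : ℝ} (hs : 0 ≤ s) (hKθ : K * θ ^ s < 1) (hρ : 0 < ρ) : μH[s] S = 0 :=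
  measure_null_of_locally_null S fun x hx =>
    ⟨S ∩ closedBall x (ρ / 2), inter_mem_nhdsWithin S (closedBall_mem_nhds x (half_pos hρ)),
      h.hausdorffMeasure_inter_closedBall_eq_zero hθ0 hθ1 hs hKθ hx ⟨half_pos hρ, half_lt_self hρ⟩⟩

end UniformCovers

section Flatness

variable {V : Type*} [NormedAddCommGroup V] [NormedSpace ℝ V]

def UniformlyFlat (m : ℕ) (ε ρ : ℝ) (S : Set V) : Prop :=
  ∀ x ∈ S, ∀ r ∈ Ioo 0 ρ, ∃ P : AffineSubspace ℝ V, x ∈ P ∧ finrank ℝ P.direction = m ∧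
    ∀ y ∈ S, y ∈ closedBall x r → infDist y P ≤ ε * r

theorem UniformlyFlat.uniformlyCoverable [FiniteDimensional ℝ V] {m : ℕ} {ε ρ : ℝ} {S : Set V}
    (h : UniformlyFlat m ε ρ S) (hε : 0 < ε) :
    UniformlyCoverable S (((2 + 5 * ε) / ε) ^ m) (6 * ε) ρ := by
  intro x hx r hr
  obtain ⟨P, hxP, hdim, hflat⟩ := h x hx r hr
  rw [← hdim]
  exact exists_finset_card_le_cover_of_infDist_le hxP hε hr.1 fun y hy => hflat y hy.1 hy.2

theorem exists_pos_forall_uniformlyFlat_hausdorffMeasure_eq_zero [FiniteDimensional ℝ V]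
    [MeasurableSpace V] [BorelSpace V] {m : ℕ} {s : ℝ} (hms : m < s) :
    ∃ ε > 0, ∀ ρ > 0, ∀ S : Set V, UniformlyFlat m ε ρ S → μH[s] S = 0 := by
  have hs : 0 ≤ s := (Nat.cast_nonneg m).trans hms.le
  have hpow : Tendsto (fun ε : ℝ => ε ^ (s - m)) (𝓝[>] 0) (𝓝 0) := by
    have := (Real.continuousAt_rpow_const 0 (s - m) (Or.inr (by linarith))).tendsto
    rw [Real.zero_rpow (by linarith)] at this
    exact this.mono_left nhdsWithin_le_nhds
  have hcoef : Tendsto (fun ε : ℝ => (2 + 5 * ε) ^ m * 6 ^ s) (𝓝[>] 0) (𝓝 (2 ^ m * 6 ^ s)) := by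
    apply tendsto_nhdsWithin_of_tendsto_nhds
    have : Continuous fun ε : ℝ => (2 + 5 * ε) ^ m * 6 ^ s := by fun_prop
    simpa using this.tendsto 0
  have hlim : Tendsto (fun ε : ℝ => ((2 + 5 * ε) / ε) ^ m * (6 * ε) ^ s) (𝓝[>] 0) (𝓝 0) := by
    have h0 : Tendsto (fun ε : ℝ => (2 + 5 * ε) ^ m * 6 ^ s * ε ^ (s - m)) (𝓝[>] 0) (𝓝 0) := by
      simpa using hcoef.mul hpow
    refine h0.congr' ?_
    filter_upwards [self_mem_nhdsWithin] with ε (hε : 0 < ε)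
    rw [div_pow, Real.mul_rpow (by norm_num) hε.le, Real.rpow_sub hε, Real.rpow_natCast]
    field_simp
  obtain ⟨ε, ⟨(hε0 : 0 < ε), hε6⟩, hεK⟩ := ((eventually_mem_nhdsWithin.and
    (nhdsWithin_le_nhds (gt_mem_nhds (by norm_num : (0 : ℝ) < 1 / 6)))).and
    (hlim.eventually (gt_mem_nhds one_pos))).exists
  refine ⟨ε, hε0, fun ρ hρ S hS => ?_⟩
  exact (hS.uniformlyCoverable hε0).hausdorffMeasure_eq_zero (by positivity) (by linarith) hs hεK hρ

theorem exists_uniformlyFlat_cover {m : ℕ} {ε : ℝ} {A : Set V} {f : V → ℝ}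
    (h : ∀ x ∈ A, ∃ ρ > (0 : ℝ), ∀ r ∈ Ioo (0 : ℝ) ρ,
      ∃ P : AffineSubspace ℝ V, x ∈ P ∧ finrank ℝ P.direction = m ∧
        ∀ y ∈ A, y ∈ closedBall x r → f y ∈ Icc (f x - ρ) (f x + ρ) → infDist y P ≤ ε * r) :
    ∃ S : ℕ × ℤ → Set V, A ⊆ ⋃ i, S i ∧ ∀ i, ∃ ρ > 0, UniformlyFlat m ε ρ (S i) := by
  choose! ρ hρ hflat using h
  -- On the piece indexed by `(n, k)`, `f` oscillates by less than `1 / (n + 1) < ρ x`, so the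
  -- constraint on `f y` in `h` is automatic there.
  refine ⟨fun i => {x ∈ A | 1 / (i.1 + 1 : ℝ) < ρ x ∧ ⌊f x * (i.1 + 1)⌋ = i.2}, fun x hx => ?_,
    fun i => ⟨1 / (i.1 + 1), by positivity, ?_⟩⟩
  · obtain ⟨n, hn⟩ := exists_nat_one_div_lt (hρ x hx)
    exact mem_iUnion.mpr ⟨(n, ⌊f x * (n + 1)⌋), hx, hn, rfl⟩
  · rintro x ⟨hxA, hxρ, hxf⟩ r hr
    obtain ⟨P, hxP, hdim, hP⟩ := hflat x hxA r ⟨hr.1, hr.2.trans hxρ⟩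
    refine ⟨P, hxP, hdim, fun y ⟨hyA, _, hyf⟩ hyx => hP y hyA hyx ?_⟩
    have hfxy := Int.abs_sub_lt_one_of_floor_eq_floor (hyf.trans hxf.symm)
    rw [← sub_mul, abs_mul, abs_of_pos (by positivity : (0 : ℝ) < i.1 + 1),
      ← lt_div_iff₀ (by positivity)] at hfxy
    constructor <;> linarith [abs_lt.mp hfxy]

end Flatness

/-- **Lemma 2.14 (Reifenberg-type dimension bound).** If, for every `ε > 0` and `x ∈ E`, there
is `ρ > 0` such that for all `r ∈ (0,ρ)` the set `E ∩ B̄_r(x) ∩ f⁻¹([f(x)-ρ, f(x)+ρ])` lies in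
an `εr`-neighborhood of some `m`-dimensional affine plane through `x`, then `dim_H E ≤ m`. -/
theorem reifenberg_dimension_bound (N m : ℕ) (E : Set (EuclideanSpace ℝ (Fin N)))
    (f : EuclideanSpace ℝ (Fin N) → ℝ)
    (h : ∀ ε > (0 : ℝ), ∀ x ∈ E, ∃ ρ > (0 : ℝ), ∀ r ∈ Ioo (0 : ℝ) ρ,
      ∃ Pl : AffineSubspace ℝ (EuclideanSpace ℝ (Fin N)),
        x ∈ Pl ∧ Module.finrank ℝ Pl.direction = m ∧
        ∀ y ∈ E, y ∈ closedBall x r → f y ∈ Icc (f x - ρ) (f x + ρ) →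
          Metric.infDist y (Pl : Set (EuclideanSpace ℝ (Fin N))) ≤ ε * r) :
    dimH E ≤ m := by
  refine dimH_le fun d hd => ?_
  by_contra! hmd
  obtain ⟨ε, hε, hnull⟩ := exists_pos_forall_uniformlyFlat_hausdorffMeasure_eq_zero
    (V := EuclideanSpace ℝ (Fin N)) (m := m) (s := d) (by exact_mod_cast hmd)
  obtain ⟨S, hES, hS⟩ := exists_uniformlyFlat_cover (h ε hε)
  have hE : μH[d] E = 0 := measure_mono_null hES <| measure_iUnion_null fun i => by
    obtain ⟨ρ, hρ, hSi⟩ := hS i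
    exact hnull ρ hρ _ hSi
  simp [hE] at hd
end

section
/- Let {E_t}_{t ∈ [−1,1]} be a family of subsets of ℝ^n and E := ∪_{t ∈ [−1,1]} E_t. Let 1 ≤ β ≤ n and γ > 0, and assume: (i) dim_H(E) ≤ β; (ii) for all ε > 0, all t_0 ∈ [−1,1], and all x_0 ∈ E_{t_0}, there exists ρ > 0 such that B_r(x_0) ∩ E_t = ∅ for all r ∈ (0,ρ) and all t > t_0 + r^{γ−ε}. Then: (a) if γ > β, then dim_H({t ∈ [−1,1] : E_t ≠ ∅}) ≤ β/γ; (b) if γ ≤ β, then dim_H(E_t) ≤ β − γ for Lebesgue-almost every t ∈ [−1,1]. -/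
open MeasureTheory Metric Filter Topology Set

/-!
Fix `δ > 0` and let `cleanPart … m t` be the set of points of `E t` at which the cleaning condition
with exponent `γ - δ` holds up to the radius `m`. If a set `c` of diameter `< m` meets
`cleanPart … m t` and `E t'`, then `t' - t ≤ (diam c)^(γ - δ)`. Since `dim_H E < β + δ`, `E` has
covers `(c_j)` with `∑ (diam c_j)^(β + δ)` arbitrarily small; the sets of times at which the
`c_j` meet `cleanPart … m` then have small `(β + δ)/(γ - δ)`-content, which gives (a). For (b),
weight each `c_j` by `(diam c_j)^(β - γ + 2δ)` on its set of times: the weights have `t`-integral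
at most `∑ (diam c_j)^(β + δ)`, so for a.e. `t` the `c_j` meeting `cleanPart … m t` have small
`(β - γ + 2δ)`-content. Finally let `m → 0` and `δ → 0`.
-/

open scoped ENNReal

section HausdorffCovers

variable {X : Type*} [EMetricSpace X] [MeasurableSpace X] [BorelSpace X] {d : ℝ} {s : Set X}

theorem hausdorffMeasure_eq_zero_of_dimH_lt (h : dimH s < ENNReal.ofReal d) : μH[d] s = 0 := by
  have hd : 0 < d := ENNReal.ofReal_pos.1 (pos_of_gt h)
  simpa [Real.coe_toNNReal _ hd.le] using hausdorffMeasure_of_dimH_lt (d := d.toNNReal) h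

theorem dimH_le_of_hausdorffMeasure_eq_zero (hd : 0 ≤ d) (h : μH[d] s = 0) :
    dimH s ≤ ENNReal.ofReal d :=
  dimH_le_of_hausdorffMeasure_ne_top (by simp [Real.coe_toNNReal _ hd, h])

theorem exists_cover_of_hausdorffMeasure_eq_zero (hd : 0 < d) (hs : μH[d] s = 0) {r η : ℝ≥0∞}
    (hr : 0 < r) (hη : 0 < η) :
    ∃ c : ℕ → Set X, s ⊆ ⋃ n, c n ∧ (∀ n, ediam (c n) ≤ r) ∧ ∑' n, ediam (c n) ^ d < η := by
  have h : (⨅ (c : ℕ → Set X) (_ : s ⊆ ⋃ n, c n) (_ : ∀ n, ediam (c n) ≤ r),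
      ∑' n, ⨆ _ : (c n).Nonempty, ediam (c n) ^ d) < η := by
    refine lt_of_le_of_lt ?_ hη
    rw [← hs, Measure.hausdorffMeasure_apply]
    exact le_iSup₂_of_le r hr le_rfl
  simp only [iInf_lt_iff] at h
  obtain ⟨c, hcov, hdiam, hsum⟩ := h
  refine ⟨c, hcov, hdiam, lt_of_le_of_lt (ENNReal.tsum_le_tsum fun n => ?_) hsum⟩
  rcases (c n).eq_empty_or_nonempty with h | h
  · simp [h, ENNReal.zero_rpow_of_pos hd]
  · simp [h]

theorem hausdorffMeasure_eq_zero_of_forall_cover (hd : 0 < d)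
    (h : ∀ η > (0 : ℝ≥0∞), ∃ c : ℕ → Set X, s ⊆ ⋃ n, c n ∧ ∑' n, ediam (c n) ^ d ≤ η) :
    μH[d] s = 0 := by
  choose! c hcov hsum using h
  have hdiam : ∀ η > 0, ∀ n, ediam (c η n) ≤ η ^ d⁻¹ := fun η hη n =>
    (ENNReal.le_rpow_inv_iff hd).2 ((ENNReal.le_tsum n).trans (hsum η hη))
  have hr : Tendsto (fun η : ℝ≥0∞ => η ^ d⁻¹) (𝓝[>] 0) (𝓝 0) := by
    simpa [ENNReal.zero_rpow_of_pos (inv_pos.2 hd)] using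
      ((ENNReal.continuous_rpow_const (y := d⁻¹)).tendsto 0).mono_left nhdsWithin_le_nhds
  have hbound := Measure.hausdorffMeasure_le_liminf_tsum d s _ hr c
    (eventually_nhdsWithin_of_forall hdiam) (eventually_nhdsWithin_of_forall hcov)
  refine le_zero_iff.1 (hbound.trans ?_)
  calc liminf (fun η => ∑' n, ediam (c η n) ^ d) (𝓝[>] 0)
      ≤ liminf id (𝓝[>] (0 : ℝ≥0∞)) := liminf_le_liminf (eventually_nhdsWithin_of_forall hsum)
    _ = 0 := (tendsto_id.mono_left nhdsWithin_le_nhds).liminf_eq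

end HausdorffCovers

section Cleaning

variable {X : Type*} [MetricSpace X] (E : ℝ → Set X) (I : Set ℝ) (γ : ℝ)

def HasCleaningRate : Prop :=
  ∀ t₀ ∈ I, ∀ x₀ ∈ E t₀, ∃ ρ > (0 : ℝ), ∀ r ∈ Ioo (0 : ℝ) ρ, ∀ t ∈ I,
    t₀ + r ^ γ < t → ball x₀ r ∩ E t = ∅

def cleanPart (m t : ℝ) : Set X :=
  {x ∈ E t | ∀ r ∈ Ioo (0 : ℝ) m, ∀ t' ∈ I, t + r ^ γ < t' → ball x r ∩ E t' = ∅}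

def cleanTimes (m : ℝ) (c : Set X) : Set ℝ :=
  {t ∈ I | (cleanPart E I γ m t ∩ c).Nonempty}

/-- The closure only makes the weight measurable; it does not change the diameter. -/
noncomputable def cleanWeight (m α : ℝ) (c : ℕ → Set X) (t : ℝ) : ℝ≥0∞ :=
  ∑' n, (closure (cleanTimes E I γ m (c n))).indicator (fun _ => ediam (c n) ^ α) t

variable {E I γ}

theorem HasCleaningRate.iUnion_cleanPart (h : HasCleaningRate E I γ) {t : ℝ} (ht : t ∈ I) :
    ⋃ k : ℕ, cleanPart E I γ (1 / (k + 1)) t = E t := by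
  refine Subset.antisymm (iUnion_subset fun k x hx => hx.1) fun x hx => ?_
  obtain ⟨ρ, hρ, hclean⟩ := h t ht x hx
  obtain ⟨k, hk⟩ := exists_nat_one_div_lt hρ
  exact mem_iUnion.2 ⟨k, hx, fun r hr => hclean r ⟨hr.1, hr.2.trans hk⟩⟩

theorem sub_le_dist_rpow_of_mem_cleanPart (hγ : 0 < γ) {m t t' : ℝ} {x x' : X}
    (hx : x ∈ cleanPart E I γ m t) (ht' : t' ∈ I) (hx' : x' ∈ E t') (hxx' : dist x x' < m) :
    t' - t ≤ dist x x' ^ γ := by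
  have hlim : Tendsto (fun r : ℝ => r ^ γ) (𝓝[>] (dist x x')) (𝓝 (dist x x' ^ γ)) :=
    (Real.continuousAt_rpow_const _ γ (Or.inr hγ.le)).tendsto.mono_left nhdsWithin_le_nhds
  refine ge_of_tendsto hlim ?_
  filter_upwards [Ioo_mem_nhdsGT hxx'] with r hr
  by_contra! hlt
  have hempty := hx.2 r ⟨dist_nonneg.trans_lt hr.1, hr.2⟩ t' ht' (by linarith)
  exact eq_empty_iff_forall_notMem.1 hempty x' ⟨mem_ball'.2 hr.1, hx'⟩

theorem ediam_cleanTimes_le (hγ : 0 < γ) {m : ℝ} {c : Set X} (hc : ediam c < ENNReal.ofReal m) :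
    ediam (cleanTimes E I γ m c) ≤ ediam c ^ γ := by
  have key : ∀ t ∈ cleanTimes E I γ m c, ∀ t' ∈ cleanTimes E I γ m c, t ≤ t' →
      edist t t' ≤ ediam c ^ γ := by
    rintro t ⟨-, x, hx, hxc⟩ t' ⟨ht', x', hx', hx'c⟩ htt'
    have hxx' : edist x x' ≤ ediam c := edist_le_ediam_of_mem hxc hx'c
    have hdist : dist x x' < m := by
      rw [dist_edist]
      exact ENNReal.toReal_lt_of_lt_ofReal (hxx'.trans_lt hc)
    calc edist t t' = ENNReal.ofReal (t' - t) := by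
          rw [edist_dist, Real.dist_eq, abs_sub_comm, abs_of_nonneg (sub_nonneg.2 htt')]
      _ ≤ ENNReal.ofReal (dist x x' ^ γ) :=
          ENNReal.ofReal_le_ofReal (sub_le_dist_rpow_of_mem_cleanPart hγ hx ht' hx'.1 hdist)
      _ = edist x x' ^ γ := by
          rw [← ENNReal.ofReal_rpow_of_nonneg dist_nonneg hγ.le, ← edist_dist]
      _ ≤ ediam c ^ γ := ENNReal.rpow_le_rpow hxx' hγ.le
  refine ediam_le fun t ht t' ht' => ?_
  rcases le_total t t' with h | h
  · exact key t ht t' ht' h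
  · rw [edist_comm]
    exact key t' ht' t ht h

theorem lintegral_cleanWeight_le (hγ : 0 < γ) {β m : ℝ} (hγβ : γ ≤ β) {c : ℕ → Set X}
    (hc : ∀ n, ediam (c n) < ENNReal.ofReal m) :
    ∫⁻ t, cleanWeight E I γ m (β - γ) c t ≤ ∑' n, ediam (c n) ^ β := by
  have hmeas : ∀ n, MeasurableSet (closure (cleanTimes E I γ m (c n))) :=
    fun n => isClosed_closure.measurableSet
  simp only [cleanWeight]
  rw [lintegral_tsum fun n => (measurable_const.indicator (hmeas n)).aemeasurable]
  refine ENNReal.tsum_le_tsum fun n => ?_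
  rw [lintegral_indicator_const (hmeas n)]
  calc ediam (c n) ^ (β - γ) * volume (closure (cleanTimes E I γ m (c n)))
      ≤ ediam (c n) ^ (β - γ) * ediam (c n) ^ γ := by
        gcongr
        calc volume (closure (cleanTimes E I γ m (c n)))
            ≤ ediam (closure (cleanTimes E I γ m (c n))) := Real.volume_le_diam _
          _ = ediam (cleanTimes E I γ m (c n)) := ediam_closure _
          _ ≤ ediam (c n) ^ γ := ediam_cleanTimes_le hγ (hc n)
    _ = ediam (c n) ^ β := by
        rw [← ENNReal.rpow_add_of_nonneg _ _ (sub_nonneg.2 hγβ) hγ.le, sub_add_cancel]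

theorem tsum_ediam_inter_cleanPart_le {α m t : ℝ} (hα : 0 < α) (ht : t ∈ I) (c : ℕ → Set X) :
    ∑' n, ediam (c n ∩ cleanPart E I γ m t) ^ α ≤ cleanWeight E I γ m α c t := by
  refine ENNReal.tsum_le_tsum fun n => ?_
  rcases (c n ∩ cleanPart E I γ m t).eq_empty_or_nonempty with h | ⟨x, hxc, hx⟩
  · simp [h, ENNReal.zero_rpow_of_pos hα]
  · rw [indicator_of_mem (subset_closure (s := cleanTimes E I γ m (c n)) ⟨ht, x, hx, hxc⟩)]
    exact ENNReal.rpow_le_rpow (ediam_mono inter_subset_left) hα.le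

variable [MeasurableSpace X] [BorelSpace X]

theorem hausdorffMeasure_setOf_cleanPart_nonempty_eq_zero {β m : ℝ} (hβ : 0 < β) (hγ : 0 < γ)
    (hm : 0 < m) (hE : μH[β] (⋃ t ∈ I, E t) = 0) :
    μH[β / γ] {t ∈ I | (cleanPart E I γ m t).Nonempty} = 0 := by
  refine hausdorffMeasure_eq_zero_of_forall_cover (div_pos hβ hγ) fun η hη => ?_
  obtain ⟨c, hcov, hdiam, hsum⟩ := exists_cover_of_hausdorffMeasure_eq_zero hβ hE
    (ENNReal.ofReal_pos.2 (half_pos hm)) hη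
  have hc : ∀ n, ediam (c n) < ENNReal.ofReal m := fun n =>
    (hdiam n).trans_lt ((ENNReal.ofReal_lt_ofReal_iff hm).2 (half_lt_self hm))
  refine ⟨fun n => cleanTimes E I γ m (c n), ?_, ?_⟩
  · rintro t ⟨ht, x, hx⟩
    obtain ⟨n, hn⟩ := mem_iUnion.1 (hcov (mem_biUnion ht hx.1))
    exact mem_iUnion.2 ⟨n, ht, x, hx, hn⟩
  · refine le_trans (ENNReal.tsum_le_tsum fun n => ?_) hsum.le
    calc ediam (cleanTimes E I γ m (c n)) ^ (β / γ) ≤ (ediam (c n) ^ γ) ^ (β / γ) :=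
          ENNReal.rpow_le_rpow (ediam_cleanTimes_le hγ (hc n)) (div_pos hβ hγ).le
      _ = ediam (c n) ^ β := by rw [← ENNReal.rpow_mul, mul_div_cancel₀ _ hγ.ne']

theorem ae_hausdorffMeasure_cleanPart_eq_zero {β m : ℝ} (hγ : 0 < γ) (hγβ : γ < β) (hm : 0 < m)
    (hE : μH[β] (⋃ t ∈ I, E t) = 0) :
    ∀ᵐ t, t ∈ I → μH[β - γ] (cleanPart E I γ m t) = 0 := by
  choose c hcov hdiam hsum using fun k : ℕ =>
    exists_cover_of_hausdorffMeasure_eq_zero (hγ.trans hγβ) hE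
      (ENNReal.ofReal_pos.2 (half_pos hm)) (η := 2⁻¹ ^ k) (ENNReal.pow_pos (by simp) k)
  have hc : ∀ k n, ediam (c k n) < ENNReal.ofReal m := fun k n =>
    (hdiam k n).trans_lt ((ENNReal.ofReal_lt_ofReal_iff hm).2 (half_lt_self hm))
  set g : ℕ → ℝ → ℝ≥0∞ := fun k => cleanWeight E I γ m (β - γ) (c k)
  have hmeas : ∀ k, Measurable (g k) := fun k =>
    Measurable.tsum fun n => measurable_const.indicator isClosed_closure.measurableSet
  have hint : ∫⁻ t, ∑' k, g k t ≠ ∞ := by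
    rw [lintegral_tsum fun k => (hmeas k).aemeasurable]
    refine ne_top_of_le_ne_top ?_ (ENNReal.tsum_le_tsum fun k =>
      (lintegral_cleanWeight_le hγ hγβ.le (hc k)).trans (hsum k).le)
    simp [ENNReal.tsum_geometric]
  filter_upwards [ae_lt_top (Measurable.tsum hmeas) hint] with t hfin ht
  refine hausdorffMeasure_eq_zero_of_forall_cover (sub_pos.2 hγβ) fun η hη => ?_
  obtain ⟨k, hk⟩ := ((ENNReal.tendsto_atTop_zero_of_tsum_ne_top hfin.ne).eventually
    (gt_mem_nhds hη)).exists
  refine ⟨fun n => c k n ∩ cleanPart E I γ m t, fun x hx => ?_,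
    (tsum_ediam_inter_cleanPart_le (sub_pos.2 hγβ) ht (c k)).trans hk.le⟩
  obtain ⟨n, hn⟩ := mem_iUnion.1 (hcov k (mem_biUnion ht hx.1))
  exact mem_iUnion.2 ⟨n, hn, hx⟩

theorem HasCleaningRate.dimH_setOf_nonempty_le (h : HasCleaningRate E I γ) {β : ℝ} (hβ : 0 < β)
    (hγ : 0 < γ) (hE : μH[β] (⋃ t ∈ I, E t) = 0) :
    dimH {t ∈ I | (E t).Nonempty} ≤ ENNReal.ofReal (β / γ) := by
  have hsub : {t ∈ I | (E t).Nonempty} ⊆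
      ⋃ k : ℕ, {t ∈ I | (cleanPart E I γ (1 / (k + 1)) t).Nonempty} := by
    rintro t ⟨ht, hne⟩
    rw [← h.iUnion_cleanPart ht, nonempty_iUnion] at hne
    obtain ⟨k, hk⟩ := hne
    exact mem_iUnion.2 ⟨k, ht, hk⟩
  refine (dimH_mono hsub).trans ?_
  rw [dimH_iUnion]
  exact iSup_le fun k => dimH_le_of_hausdorffMeasure_eq_zero (div_pos hβ hγ).le
    (hausdorffMeasure_setOf_cleanPart_nonempty_eq_zero hβ hγ Nat.one_div_pos_of_nat hE)

theorem HasCleaningRate.ae_dimH_le (h : HasCleaningRate E I γ) {β : ℝ} (hγ : 0 < γ)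
    (hγβ : γ < β) (hE : μH[β] (⋃ t ∈ I, E t) = 0) :
    ∀ᵐ t, t ∈ I → dimH (E t) ≤ ENNReal.ofReal (β - γ) := by
  have hzero := fun k : ℕ =>
    ae_hausdorffMeasure_cleanPart_eq_zero hγ hγβ Nat.one_div_pos_of_nat hE (m := 1 / (k + 1))
  filter_upwards [ae_all_iff.2 hzero] with t hzero ht
  rw [← h.iUnion_cleanPart ht, dimH_iUnion]
  exact iSup_le fun k => dimH_le_of_hausdorffMeasure_eq_zero (sub_pos.2 hγβ).le (hzero k ht)

end Cleaning

theorem abstract_cleaning_dimension_general (N : ℕ) (Efam : ℝ → Set (EuclideanSpace ℝ (Fin N)))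
    (β γ : ℝ) (hβ1 : 1 ≤ β) (hγ : 0 < γ)
    (hdim : dimH (⋃ t ∈ Icc (-1 : ℝ) 1, Efam t) ≤ ENNReal.ofReal β)
    (hclean : ∀ ε > (0 : ℝ), ∀ t₀ ∈ Icc (-1 : ℝ) 1, ∀ x₀ ∈ Efam t₀,
      ∃ ρ > (0 : ℝ), ∀ r ∈ Ioo (0 : ℝ) ρ, ∀ t ∈ Icc (-1 : ℝ) 1,
        t₀ + r ^ (γ - ε) < t → ball x₀ r ∩ Efam t = ∅) :
    (β < γ → dimH {t ∈ Icc (-1 : ℝ) 1 | (Efam t).Nonempty} ≤ ENNReal.ofReal (β / γ)) ∧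
    (γ ≤ β → ∀ᵐ t ∂(volume.restrict (Icc (-1 : ℝ) 1)),
      dimH (Efam t) ≤ ENNReal.ofReal (β - γ)) := by
  obtain ⟨δ, -, hδ, hδ0⟩ := exists_seq_strictAnti_tendsto' hγ
  have hβδ : ∀ k, 0 < β + δ k := fun k => by linarith [(hδ k).1]
  have hrate : ∀ k, HasCleaningRate Efam (Icc (-1) 1) (γ - δ k) := fun k => hclean _ (hδ k).1
  have hγδ : ∀ k, 0 < γ - δ k := fun k => sub_pos.2 (hδ k).2
  have hE : ∀ k, μH[β + δ k] (⋃ t ∈ Icc (-1 : ℝ) 1, Efam t) = 0 := fun k =>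
    hausdorffMeasure_eq_zero_of_dimH_lt <| hdim.trans_lt <|
      (ENNReal.ofReal_lt_ofReal_iff (hβδ k)).2 (lt_add_of_pos_right β (hδ k).1)
  constructor
  · intro _
    have hlim : Tendsto (fun k => ENNReal.ofReal ((β + δ k) / (γ - δ k))) atTop
        (𝓝 (ENNReal.ofReal (β / γ))) :=
      ENNReal.tendsto_ofReal <| by
        have h := (tendsto_const_nhds (x := β)).add hδ0 |>.div
          ((tendsto_const_nhds (x := γ)).sub hδ0) (by rw [sub_zero]; exact hγ.ne')
        rwa [add_zero, sub_zero] at h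
    exact ge_of_tendsto' hlim fun k => (hrate k).dimH_setOf_nonempty_le (hβδ k) (hγδ k) (hE k)
  · intro hγβ
    have hlim : Tendsto (fun k => ENNReal.ofReal ((β + δ k) - (γ - δ k))) atTop
        (𝓝 (ENNReal.ofReal (β - γ))) :=
      ENNReal.tendsto_ofReal <| by
        simpa using (tendsto_const_nhds.add hδ0).sub (tendsto_const_nhds.sub hδ0)
    have hae := fun k => (hrate k).ae_dimH_le (hγδ k) (by linarith [(hδ k).1]) (hE k)
    rw [ae_restrict_iff' measurableSet_Icc]
    filter_upwards [ae_all_iff.2 hae] with t ht htI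
    exact ge_of_tendsto' hlim fun k => ht k htI

/-- **Proposition 2.15 (abstract GMT cleaning).** Let `{E_t}_{t∈[-1,1]}` with
`E = ∪_t E_t ⊆ ℝ^N`, `1 ≤ β ≤ N`, `γ > 0`. Assume `dim_H E ≤ β` and the cleaning property:
for all `ε > 0`, `t₀ ∈ [-1,1]`, `x₀ ∈ E_{t₀}` there is `ρ > 0` with `B_r(x₀) ∩ E_t = ∅` for
all `r ∈ (0,ρ)` and `t > t₀ + r^{γ-ε}`. Then (a) if `γ > β`,
`dim_H {t : E_t ≠ ∅} ≤ β/γ`; (b) if `γ ≤ β`, `dim_H E_t ≤ β - γ` for a.e. `t ∈ [-1,1]`. -/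
theorem abstract_cleaning_dimension (N : ℕ) (Efam : ℝ → Set (EuclideanSpace ℝ (Fin N)))
    (β γ : ℝ) (hβ1 : 1 ≤ β) (hβN : β ≤ N) (hγ : 0 < γ)
    (hdim : dimH (⋃ t ∈ Icc (-1 : ℝ) 1, Efam t) ≤ ENNReal.ofReal β)
    (hclean : ∀ ε > (0 : ℝ), ∀ t₀ ∈ Icc (-1 : ℝ) 1, ∀ x₀ ∈ Efam t₀,
      ∃ ρ > (0 : ℝ), ∀ r ∈ Ioo (0 : ℝ) ρ, ∀ t ∈ Icc (-1 : ℝ) 1,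
        t₀ + r ^ (γ - ε) < t → ball x₀ r ∩ Efam t = ∅) :
    (β < γ → dimH {t ∈ Icc (-1 : ℝ) 1 | (Efam t).Nonempty} ≤ ENNReal.ofReal (β / γ)) ∧
    (γ ≤ β → ∀ᵐ t ∂(volume.restrict (Icc (-1 : ℝ) 1)),
      dimH (Efam t) ≤ ENNReal.ofReal (β - γ)) :=
  abstract_cleaning_dimension_general N Efam β γ hβ1 hγ hdim hclean
end
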